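/- In every generalized hypertree decomposition of a hypergraph H there exists a node u such that λ_u is a balanced separator of H, i.e., every connected component C of the subhypergraph of H induced on V(H) \ B(λ_u) satisfies |{e ∈ E(H) : e ∩ C ≠ ∅}| ≤ |E(H)| / 2. -/

import Mathlib

/-- A hypergraph: a finite set of vertices and a finite set of nonempty edges,
each of which is a subset of the vertex set. -/
structure HGraph (V : Type) where
  verts : Finset V
  edges : Finset (Finset V)
  nonempty_of_mem : ∀ e ∈ edges, e.Nonempty
  subset_verts : ∀ e ∈ edges, e ⊆ verts

variable {V : Type} [DecidableEq V]

/-- The data of a (generalized) hypertree decomposition: a finite rooted tree together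
with a bag `B_u` and an (integral) edge labelling `λ_u` (given as the finite set of edges
with value 1) for each node. -/
structure Decomp (V : Type) where
  n : ℕ
  tree : SimpleGraph (Fin n)
  root : Fin n
  bag : Fin n → Finset V
  cover : Fin n → Finset (Finset V)

/-- `u'` lies in the subtree `T_u` rooted at `u`: every path from the root to `u'`
passes through `u`. -/
def Decomp.desc (D : Decomp V) (u u' : Fin D.n) : Prop :=
  ∀ p : D.tree.Path D.root u', u ∈ p.1.support

/-- `D` is a generalized hypertree decomposition (GHD) of `H`:
the tree is a tree, every edge is covered by some bag, the set of nodes containing a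
given vertex is connected in the tree, each `λ_u` uses only edges of `H`, and
`B_u ⊆ B(λ_u)`. -/
def Decomp.IsGHD (H : HGraph V) (D : Decomp V) : Prop :=
  D.tree.IsTree ∧
  (∀ e ∈ H.edges, ∃ u, e ⊆ D.bag u) ∧
  (∀ v : V, (D.tree.induce {u | v ∈ D.bag u}).Preconnected) ∧
  (∀ u, D.cover u ⊆ H.edges) ∧
  (∀ u, D.bag u ⊆ (D.cover u).biUnion id)

/-- `D` is a hypertree decomposition (HD) of `H`: a GHD satisfying in addition the
special condition `V(T_u) ∩ B(λ_u) ⊆ B_u` for every node `u`. -/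
def Decomp.IsHD (H : HGraph V) (D : Decomp V) : Prop :=
  D.IsGHD H ∧
  ∀ u u', D.desc u u' → ∀ v ∈ D.bag u', v ∈ (D.cover u).biUnion id → v ∈ D.bag u

/-- The generalized hypertree width of `H`: the least `k` such that `H` has a GHD all of
whose labels `λ_u` have weight (cardinality) at most `k`. -/
noncomputable def ghw (H : HGraph V) : ℕ :=
  sInf {k | ∃ D : Decomp V, D.IsGHD H ∧ ∀ u, (D.cover u).card ≤ k}

/-- The hypertree width of `H`: the least `k` such that `H` has an HD all of whose
labels `λ_u` have weight (cardinality) at most `k`. -/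
noncomputable def hw (H : HGraph V) : ℕ :=
  sInf {k | ∃ D : Decomp V, D.IsHD H ∧ ∀ u, (D.cover u).card ≤ k}

/-- Connectivity in the subhypergraph of `H` induced on the vertex set `W`:
`x` and `y` are joined by a path each of whose steps stays in `W` and is witnessed by an
edge of `H` containing both endpoints. -/
def HConn (H : HGraph V) (W : Finset V) : V → V → Prop :=
  Relation.ReflTransGen (fun a b => a ∈ W ∧ b ∈ W ∧ ∃ e ∈ H.edges, a ∈ e ∧ b ∈ e)

/-- `C` is a connected component of the subhypergraph of `H` induced on `W`:
a maximal nonempty set of vertices of `W` that are pairwise connected within `W`. -/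
def IsComponent (H : HGraph V) (W : Finset V) (C : Finset V) : Prop :=
  C.Nonempty ∧ C ⊆ W ∧
  (∀ x ∈ C, ∀ y ∈ C, HConn H W x y) ∧
  (∀ x ∈ C, ∀ y ∈ W, HConn H W x y → y ∈ C)

/-!
Suppose every node `u` has a heavy component `C_u` of `V(H) \ B(λ_u)`, i.e. one meeting more
than half of the edges. Since `B_u ⊆ B(λ_u)`, the nodes whose bags cover edges meeting `C_u`
all lie in a single branch of `T - u`; point `u` towards that branch. In a finite tree some
two adjacent nodes point at each other (follow the pointer from a node whose branch is
smallest). An edge meeting both `C_u` and `C_{u₁}` would then be covered by a node lying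
beyond the tree edge `uu₁` as seen from either endpoint, which acyclicity forbids, so the two
heavy components meet disjoint sets of edges: more than `|E(H)|` edges in total.
-/

open Finset

namespace SimpleGraph

variable {α : Type*} {G : SimpleGraph α}

def ReachableAvoiding (G : SimpleGraph α) (u a b : α) : Prop :=
  ∃ p : G.Walk a b, u ∉ p.support

namespace ReachableAvoiding

variable {u a b c : α}

theorem symm (h : G.ReachableAvoiding u a b) : G.ReachableAvoiding u b a := by
  obtain ⟨p, hp⟩ := h
  exact ⟨p.reverse, by simpa using hp⟩

theorem trans (h₁ : G.ReachableAvoiding u a b) (h₂ : G.ReachableAvoiding u b c) :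
    G.ReachableAvoiding u a c := by
  obtain ⟨p, hp⟩ := h₁
  obtain ⟨q, hq⟩ := h₂
  exact ⟨p.append q, by simp [Walk.mem_support_append_iff, hp, hq]⟩

theorem ne_left (h : G.ReachableAvoiding u a b) : a ≠ u := by
  obtain ⟨p, hp⟩ := h
  rintro rfl
  exact hp p.start_mem_support

theorem ne_right (h : G.ReachableAvoiding u a b) : b ≠ u :=
  h.symm.ne_left

end ReachableAvoiding

theorem reachableAvoiding_of_preconnected_induce {s : Set α} (hs : (G.induce s).Preconnected)
    {u a b : α} (ha : a ∈ s) (hb : b ∈ s) (hu : u ∉ s) : G.ReachableAvoiding u a b := by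
  obtain ⟨p⟩ := hs ⟨a, ha⟩ ⟨b, hb⟩
  let q := p.map (Embedding.induce s).toHom
  suffices u ∉ q.support from ⟨q, this⟩
  rw [Walk.support_map, List.mem_map]
  rintro ⟨⟨x, hx⟩, -, rfl⟩
  exact hu hx

namespace Preconnected

variable (hG : G.Preconnected)
include hG

theorem exists_adj_reachableAvoiding {u a : α} (hua : u ≠ a) :
    ∃ u₁, G.Adj u u₁ ∧ G.ReachableAvoiding u a u₁ := by
  classical
  obtain ⟨p⟩ := hG u a
  obtain ⟨⟨p, hp⟩⟩ : Nonempty (G.Path u a) := ⟨p.toPath⟩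
  cases p with
  | nil => exact absurd rfl hua
  | cons hadj q =>
    rw [Walk.cons_isPath_iff] at hp
    exact ⟨_, hadj, q.reverse, by simpa using hp.2⟩

theorem reachableAvoiding_or {u u₁ w : α} (hu : u ≠ u₁) :
    G.ReachableAvoiding u u₁ w ∨ G.ReachableAvoiding u₁ u w := by
  classical
  obtain ⟨p⟩ := hG w u
  obtain ⟨⟨p, hp⟩⟩ : Nonempty (G.Path w u) := ⟨p.toPath⟩
  by_cases hu₁ : u₁ ∈ p.support
  · exact Or.inl (ReachableAvoiding.symm
      ⟨p.takeUntil u₁ hu₁, Walk.endpoint_notMem_support_takeUntil hp hu₁ hu⟩)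
  · exact Or.inr (ReachableAvoiding.symm ⟨p, hu₁⟩)

theorem exists_adj_mutually_reachableAvoiding [Fintype α] [Nonempty α] (b : α → α)
    (hb : ∀ u, b u ≠ u) :
    ∃ u u₁, G.Adj u u₁ ∧
      G.ReachableAvoiding u (b u) u₁ ∧ G.ReachableAvoiding u₁ (b u₁) u := by
  classical
  let side (u : α) : Finset α := univ.filter (G.ReachableAvoiding u (b u))
  obtain ⟨u, -, hmin⟩ := exists_min_image univ (fun u => #(side u)) univ_nonempty
  obtain ⟨u₁, hadj, hu₁⟩ := hG.exists_adj_reachableAvoiding (hb u).symm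
  refine ⟨u, u₁, hadj, hu₁, ?_⟩
  by_contra hu
  have hsub : side u₁ ⊆ side u := by
    intro w hw
    simp only [side, mem_filter, mem_univ, true_and] at hw ⊢
    rcases hG.reachableAvoiding_or hadj.ne with h | h
    · exact hu₁.trans h
    · exact absurd (hw.trans h.symm) hu
  have hssub : side u₁ ⊂ side u :=
    (ssubset_iff_of_subset hsub).2 ⟨u₁, mem_filter.2 ⟨mem_univ _, hu₁⟩,
      fun h => (mem_filter.1 h).2.ne_right rfl⟩
  exact (hmin u₁ (mem_univ _)).not_gt (card_lt_card hssub)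

end Preconnected

theorem IsAcyclic.not_reachableAvoiding_and (hG : G.IsAcyclic) {u u₁ w : α}
    (hadj : G.Adj u u₁) :
    ¬ (G.ReachableAvoiding u u₁ w ∧ G.ReachableAvoiding u₁ u w) := by
  rintro ⟨⟨p, hp⟩, ⟨q, hq⟩⟩
  have hbridge := isBridge_iff_forall_walk_mem_edges.1
    (isAcyclic_iff_forall_adj_isBridge.1 hG hadj) (q.append p.reverse)
  rw [Walk.edges_append, List.mem_append, Walk.edges_reverse, List.mem_reverse] at hbridge
  rcases hbridge with he | he
  · exact hq (q.snd_mem_support_of_mem_edges he)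
  · exact hp (p.fst_mem_support_of_mem_edges he)

end SimpleGraph

def HGraph.touching (H : HGraph V) (C : Finset V) : Finset (Finset V) :=
  H.edges.filter fun e => (e ∩ C).Nonempty

namespace Decomp.IsGHD

variable {H : HGraph V} {D : Decomp V} {W : Finset V} {u : Fin D.n}

theorem reachableAvoiding_of_hConn (hD : D.IsGHD H) (hW : Disjoint W (D.bag u)) {x y : V}
    (hxy : HConn H W x y) (hx : x ∈ W) {w w' : Fin D.n} (hw : x ∈ D.bag w)
    (hw' : y ∈ D.bag w') : D.tree.ReachableAvoiding u w w' := by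
  induction hxy generalizing w' with
  | refl =>
    exact SimpleGraph.reachableAvoiding_of_preconnected_induce (hD.2.2.1 x) hw hw'
      (disjoint_left.1 hW hx)
  | tail _ hbc ih =>
    obtain ⟨-, hcW, f, hf, hbf, hcf⟩ := hbc
    obtain ⟨w₀, hw₀⟩ := hD.2.1 f hf
    exact (ih (hw₀ hbf)).trans (SimpleGraph.reachableAvoiding_of_preconnected_induce
      (hD.2.2.1 _) (hw₀ hcf) hw' (disjoint_left.1 hW hcW))

theorem reachableAvoiding_of_mem_touching (hD : D.IsGHD H) (hW : Disjoint W (D.bag u))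
    {C : Finset V} (hC : IsComponent H W C) {e e' : Finset V} (he : e ∈ H.touching C)
    (he' : e' ∈ H.touching C) {w w' : Fin D.n} (hw : e ⊆ D.bag w) (hw' : e' ⊆ D.bag w') :
    D.tree.ReachableAvoiding u w w' := by
  obtain ⟨x, hx⟩ := (mem_filter.1 he).2
  obtain ⟨y, hy⟩ := (mem_filter.1 he').2
  rw [mem_inter] at hx hy
  exact hD.reachableAvoiding_of_hConn hW (hC.2.2.1 x hx.2 y hy.2) (hC.2.1 hx.2)
    (hw hx.1) (hw' hy.1)

theorem disjoint_verts_sdiff_bag (hD : D.IsGHD H) (u : Fin D.n) :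
    Disjoint (H.verts \ (D.cover u).biUnion id) (D.bag u) :=
  disjoint_left.2 fun _ hv hb => (mem_sdiff.1 hv).2 (hD.2.2.2.2 u hb)

end Decomp.IsGHD

theorem HGraph.card_touching_add_card_touching_le {H : HGraph V} {C C' : Finset V}
    (h : Disjoint (H.touching C) (H.touching C')) :
    (H.touching C).card + (H.touching C').card ≤ H.edges.card := by
  rw [← card_union_of_disjoint h]
  exact card_le_card (union_subset (filter_subset _ _) (filter_subset _ _))

theorem HGraph.touching_nonempty_of_card_gt {H : HGraph V} {C : Finset V}
    (h : (H.edges.card : ℚ) / 2 < (H.touching C).card) : (H.touching C).Nonempty := by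
  rw [← card_pos]
  exact_mod_cast (by positivity : (0 : ℚ) ≤ _).trans_lt h

/-- In every GHD of `H` there is a node `u` whose label `λ_u` is a balanced separator:
every connected component `C` of the subhypergraph of `H` induced on `V(H) \ B(λ_u)`
satisfies `|{e ∈ E(H) : e ∩ C ≠ ∅}| ≤ |E(H)| / 2`. -/
theorem exists_balanced_separator (H : HGraph V) (D : Decomp V) (hD : D.IsGHD H) :
    ∃ u : Fin D.n, ∀ C : Finset V,
      IsComponent H (H.verts \ (D.cover u).biUnion id) C →
      ((H.edges.filter fun e => (e ∩ C).Nonempty).card : ℚ) ≤ (H.edges.card : ℚ) / 2 := by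
  have hTree := hD.1
  have hcover := hD.2.1
  have := hTree.connected.nonempty
  by_contra! hheavy
  choose C hC hC_heavy using hheavy
  change ∀ u, (H.edges.card : ℚ) / 2 < (H.touching (C u)).card at hC_heavy
  have side {u w w' : Fin D.n} {e e' : Finset V} (he : e ∈ H.touching (C u))
      (he' : e' ∈ H.touching (C u)) (hw : e ⊆ D.bag w) (hw' : e' ⊆ D.bag w') :
      D.tree.ReachableAvoiding u w w' :=
    hD.reachableAvoiding_of_mem_touching (hD.disjoint_verts_sdiff_bag u) (hC u) he he' hw hw'
  choose e he using fun u => HGraph.touching_nonempty_of_card_gt (hC_heavy u)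
  choose b hb using fun u => hcover (e u) (mem_filter.1 (he u)).1
  obtain ⟨u, u₁, hadj, hu, hu₁⟩ :=
    hTree.connected.preconnected.exists_adj_mutually_reachableAvoiding b
      fun u => (side (he u) (he u) (hb u) (hb u)).ne_left
  have hdisj : Disjoint (H.touching (C u)) (H.touching (C u₁)) := by
    refine disjoint_left.2 fun f hf hf₁ => ?_
    obtain ⟨w, hw⟩ := hcover f (mem_filter.1 hf).1
    exact hTree.isAcyclic.not_reachableAvoiding_and hadj
      ⟨hu.symm.trans (side (he u) hf (hb u) hw),
        hu₁.symm.trans (side (he u₁) hf₁ (hb u₁) hw)⟩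
  have hcard : ((H.touching (C u)).card + (H.touching (C u₁)).card : ℚ) ≤ H.edges.card := by
    exact_mod_cast HGraph.card_touching_add_card_touching_le hdisj
  linarith [hC_heavy u, hC_heavy u₁]
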